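/- arXiv:2006.07052 — 3 statements merged into one kernel-verified Lean document; each statement's English description precedes it below -/
import Mathlib

section
/- Let ξ₁ > 0 and 1 < ξ₂₁ < ξ₂₂, and let F₁, F₂ be the Beta(ξ₁,ξ₂₁) and Beta(ξ₁,ξ₂₂) CDFs. Then the ratio F₂^{-1}(ω)/F₁^{-1}(ω) is not constant on (0,1); in fact there exist 0 < ω̲ < ω̄ < 1 on which it is strictly increasing. -/
open MeasureTheory Set Real

/-- The Beta(ξ₁, ξ₂) cumulative distribution function on (0,1). -/
noncomputable def betaCDF (ξ₁ ξ₂ : ℝ) (q : ℝ) : ℝ :=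
  ∫ γ in Set.Ioo (0:ℝ) q,
    γ ^ (ξ₁ - 1) * (1 - γ) ^ (ξ₂ - 1) / (Real.Gamma ξ₁ * Real.Gamma ξ₂ / Real.Gamma (ξ₁ + ξ₂))

open ProbabilityTheory Filter Topology

/-!
The likelihood ratio of `Beta(ξ₁, ξ₂₂)` to `Beta(ξ₁, ξ₂₁)` is a constant times
`(1 - x) ^ (ξ₂₂ - ξ₂₁)`, which is strictly decreasing; this forces strict stochastic dominance
`F₁ < F₂` on `(0, 1)`, hence `G₂ < G₁` for the quantile functions. So the ratio `R = G₂ / G₁` is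
below `1` at `1/2`, while `G₂ ω → 1` as `ω → 1` and `G₁ ≤ 1`: `R` is not antitone.
By the inverse function theorem the quantile functions are `C¹`, so `R'` is continuous and, being
positive somewhere, is positive on a whole interval.
-/

theorem integral_lt_integral_of_strictAntiOn_ratio {f g r : ℝ → ℝ} {a b q : ℝ}
    (hf : IntervalIntegrable f volume a b) (hg : IntervalIntegrable g volume a b)
    (hf_pos : ∀ x ∈ Ioo a b, 0 < f x) (hgr : ∀ x ∈ Ioo a b, g x = r x * f x)
    (hr : StrictAntiOn r (Ioo a b)) (hfg : ∫ x in a..b, f x = ∫ x in a..b, g x)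
    (hq : q ∈ Ioo a b) : ∫ x in a..q, f x < ∫ x in a..q, g x := by
  have hsub_left : uIcc a q ⊆ uIcc a b :=
    uIcc_subset_uIcc left_mem_uIcc (mem_uIcc_of_le hq.1.le hq.2.le)
  have hsub_right : uIcc q b ⊆ uIcc a b :=
    uIcc_subset_uIcc (mem_uIcc_of_le hq.1.le hq.2.le) right_mem_uIcc
  have hA : 0 < ∫ x in a..q, f x :=
    intervalIntegral.intervalIntegral_pos_of_pos_on (hf.mono_set hsub_left)
      (fun x hx => hf_pos x ⟨hx.1, hx.2.trans hq.2⟩) hq.1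
  have hA' : 0 < ∫ x in q..b, f x :=
    intervalIntegral.intervalIntegral_pos_of_pos_on (hf.mono_set hsub_right)
      (fun x hx => hf_pos x ⟨hq.1.trans hx.1, hx.2⟩) hq.2
  -- `g / f` exceeds `r q` to the left of `q` and falls below it to the right
  have hB : r q * ∫ x in a..q, f x < ∫ x in a..q, g x := by
    rw [← intervalIntegral.integral_const_mul, ← sub_pos,
      ← intervalIntegral.integral_sub (hg.mono_set hsub_left)
        ((hf.mono_set hsub_left).const_mul _)]
    refine intervalIntegral.intervalIntegral_pos_of_pos_on
      ((hg.mono_set hsub_left).sub ((hf.mono_set hsub_left).const_mul _)) (fun x hx => ?_) hq.1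
    have hx' : x ∈ Ioo a b := ⟨hx.1, hx.2.trans hq.2⟩
    rw [hgr x hx', ← sub_mul]
    exact mul_pos (sub_pos.2 (hr hx' hq hx.2)) (hf_pos x hx')
  have hB' : ∫ x in q..b, g x < r q * ∫ x in q..b, f x := by
    rw [← intervalIntegral.integral_const_mul, ← sub_pos,
      ← intervalIntegral.integral_sub ((hf.mono_set hsub_right).const_mul _)
        (hg.mono_set hsub_right)]
    refine intervalIntegral.intervalIntegral_pos_of_pos_on
      (((hf.mono_set hsub_right).const_mul _).sub (hg.mono_set hsub_right)) (fun x hx => ?_) hq.2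
    have hx' : x ∈ Ioo a b := ⟨hq.1.trans hx.1, hx.2⟩
    rw [hgr x hx', ← sub_mul]
    exact mul_pos (sub_pos.2 (hr hq hx' hx.1)) (hf_pos x hx')
  have hsplit : (∫ x in a..q, f x) + ∫ x in q..b, f x = (∫ x in a..q, g x) + ∫ x in q..b, g x := by
    rwa [intervalIntegral.integral_add_adjacent_intervals (hf.mono_set hsub_left)
        (hf.mono_set hsub_right),
      intervalIntegral.integral_add_adjacent_intervals (hg.mono_set hsub_left)
        (hg.mono_set hsub_right)]
  -- with `A, A'` the two halves of `∫ f` and `B, B'` those of `∫ g`: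
  -- `B A' > r q A A' > A B'`, and `A + A' = B + B'` turns this into `B > A`
  nlinarith [mul_pos hA hA']

theorem exists_Icc_strictMonoOn_of_not_antitoneOn {f : ℝ → ℝ} {s : Set ℝ} (hs : IsOpen s)
    (hs_conv : Convex ℝ s) (hf : ContDiffOn ℝ 1 f s) (h : ¬ AntitoneOn f s) :
    ∃ c d, c < d ∧ Icc c d ⊆ s ∧ StrictMonoOn f (Icc c d) := by
  have hdiff : DifferentiableOn ℝ f s := hf.differentiableOn one_ne_zero
  obtain ⟨x, hxs, hx⟩ : ∃ x ∈ s, 0 < deriv f x := by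
    by_contra! hnonpos
    refine h (antitoneOn_of_deriv_nonpos hs_conv hf.continuousOn ?_ ?_) <;> rw [hs.interior_eq]
    exacts [hdiff, hnonpos]
  have hev : ∀ᶠ y in 𝓝 x, y ∈ s ∧ 0 < deriv f y :=
    Eventually.and (hs.mem_nhds hxs)
      ((hf.continuousOn_deriv_of_isOpen hs le_rfl).continuousAt (hs.mem_nhds hxs) |>.eventually
        (lt_mem_nhds hx))
  obtain ⟨l, u, ⟨hlx, hxu⟩, hlu⟩ := mem_nhds_iff_exists_Ioo_subset.1 hev
  obtain ⟨c, hlc, hcx⟩ := exists_between hlx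
  obtain ⟨d, hxd, hdu⟩ := exists_between hxu
  have hsub : Icc c d ⊆ Ioo l u := Icc_subset_Ioo hlc hdu
  refine ⟨c, d, hcx.trans hxd, fun y hy => (hlu (hsub hy)).1, ?_⟩
  refine strictMonoOn_of_deriv_pos (convex_Icc c d)
    (hf.continuousOn.mono fun y hy => (hlu (hsub hy)).1) fun y hy => ?_
  exact (hlu (hsub (interior_subset hy))).2

section RightInverse

variable {F G : ℝ → ℝ} {s t : Set ℝ}

theorem StrictMonoOn.strictMonoOn_of_rightInvOn (hF : StrictMonoOn F s) (hG : MapsTo G t s)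
    (hGF : RightInvOn G F t) : StrictMonoOn G t := fun x hx y hy hxy => by
  rwa [← hF.lt_iff_lt (hG hx) (hG hy), hGF hx, hGF hy]

theorem image_eq_of_rightInvOn (hF : InjOn F s) (hFst : MapsTo F s t) (hG : MapsTo G t s)
    (hGF : RightInvOn G F t) : G '' t = s :=
  (InvOn.bijOn ⟨hGF, hF.rightInvOn_of_leftInvOn hGF hFst hG⟩ hG hFst).image_eq

theorem contDiffOn_one_of_rightInvOn {F' : ℝ → ℝ} (hs : IsOpen s) (ht : IsOpen t)
    (hF : StrictMonoOn F s) (hFd : ∀ x ∈ s, HasDerivAt F (F' x) x) (hF' : ContinuousOn F' s)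
    (hF'0 : ∀ x ∈ s, F' x ≠ 0) (hFst : MapsTo F s t) (hG : MapsTo G t s)
    (hGF : RightInvOn G F t) : ContDiffOn ℝ 1 G t := by
  have hcont : ∀ y ∈ t, ContinuousAt G y := fun y hy =>
    continuousAt_of_monotoneOn_of_image_mem_nhds
      (hF.strictMonoOn_of_rightInvOn hG hGF).monotoneOn (ht.mem_nhds hy)
      (image_eq_of_rightInvOn hF.injOn hFst hG hGF ▸ hs.mem_nhds (hG hy))
  have hderiv : ∀ y ∈ t, HasDerivAt G (F' (G y))⁻¹ y := fun y hy =>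
    (hFd _ (hG hy)).of_local_left_inverse (hcont y hy) (hF'0 _ (hG hy))
      (eventually_of_mem (ht.mem_nhds hy) hGF)
  rw [show (1 : WithTop ℕ∞) = 0 + 1 from rfl, contDiffOn_succ_iff_deriv_of_isOpen ht,
    contDiffOn_zero]
  refine ⟨fun y hy => (hderiv y hy).differentiableAt.differentiableWithinAt, by simp, ?_⟩
  refine ContinuousOn.congr (f := fun y => (F' (G y))⁻¹) (fun y hy => ?_)
    fun y hy => (hderiv y hy).deriv
  exact ((hF'.continuousAt (hs.mem_nhds (hG hy))).comp (hcont y hy)).inv₀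
    (hF'0 _ (hG hy)) |>.continuousWithinAt

end RightInverse

section Beta

variable {a b b₁ b₂ : ℝ} {G G₁ G₂ : ℝ → ℝ}

theorem betaCDF_eq_setIntegral {q : ℝ} (hq : q ≤ 1) :
    betaCDF a b q = ∫ x in Ioo 0 q, betaPDFReal a b x := by
  refine setIntegral_congr_fun measurableSet_Ioo fun x hx => ?_
  rw [betaPDFReal, if_pos ⟨hx.1, hx.2.trans_le hq⟩, beta]
  ring

theorem betaCDF_eq_intervalIntegral {q : ℝ} (hq₀ : 0 ≤ q) (hq₁ : q ≤ 1) :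
    betaCDF a b q = ∫ x in 0..q, betaPDFReal a b x := by
  rw [betaCDF_eq_setIntegral hq₁, intervalIntegral.integral_of_le hq₀,
    integral_Ioc_eq_integral_Ioo]

theorem betaPDFReal_nonneg (x : ℝ) (ha : 0 < a) (hb : 0 < b) : 0 ≤ betaPDFReal a b x := by
  by_cases hx : 0 < x ∧ x < 1
  · exact (betaPDFReal_pos hx.1 hx.2 ha hb).le
  · rw [betaPDFReal, if_neg hx]

theorem integrable_betaPDFReal (ha : 0 < a) (hb : 0 < b) : Integrable (betaPDFReal a b) := by
  refine ⟨(stronglyMeasurable_betaPDFReal a b).aestronglyMeasurable, ?_⟩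
  rw [hasFiniteIntegral_iff_ofReal (ae_of_all _ fun x => betaPDFReal_nonneg x ha hb)]
  simp [← betaPDF.eq_def, lintegral_betaPDF_eq_one ha hb]

theorem betaCDF_zero : betaCDF a b 0 = 0 := by
  simp [betaCDF]

theorem betaCDF_one (ha : 0 < a) (hb : 0 < b) : betaCDF a b 1 = 1 := by
  rw [betaCDF_eq_setIntegral le_rfl, setIntegral_eq_integral_of_forall_compl_eq_zero
    (s := Ioo 0 1) (f := betaPDFReal a b) fun x hx => if_neg hx, integral_eq_lintegral_of_nonneg_ae
      (ae_of_all _ fun x => betaPDFReal_nonneg x ha hb)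
      (stronglyMeasurable_betaPDFReal a b).aestronglyMeasurable]
  simp [← betaPDF.eq_def, lintegral_betaPDF_eq_one ha hb]

theorem betaCDF_strictMonoOn (ha : 0 < a) (hb : 0 < b) :
    StrictMonoOn (betaCDF a b) (Icc 0 1) := fun x hx y hy hxy => by
  have hint : ∀ c, IntervalIntegrable (betaPDFReal a b) volume 0 c := fun _ =>
    (integrable_betaPDFReal ha hb).intervalIntegrable
  rw [← sub_pos, betaCDF_eq_intervalIntegral hy.1 hy.2, betaCDF_eq_intervalIntegral hx.1 hx.2,
    intervalIntegral.integral_interval_sub_left (hint y) (hint x)]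
  exact intervalIntegral.intervalIntegral_pos_of_pos_on
    (integrable_betaPDFReal ha hb).intervalIntegrable
    (fun z hz => betaPDFReal_pos (hx.1.trans_lt hz.1) (hz.2.trans_le hy.2) ha hb) hxy

theorem betaCDF_mapsTo (ha : 0 < a) (hb : 0 < b) :
    MapsTo (betaCDF a b) (Ioo 0 1) (Ioo 0 1) := fun x hx => by
  have hmono := betaCDF_strictMonoOn ha hb
  have hx' := Ioo_subset_Icc_self hx
  refine ⟨?_, ?_⟩
  · simpa [betaCDF_zero] using hmono (left_mem_Icc.2 zero_le_one) hx' hx.1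
  · simpa [betaCDF_one ha hb] using hmono hx' (right_mem_Icc.2 zero_le_one) hx.2

theorem continuousOn_betaPDFReal : ContinuousOn (betaPDFReal a b) (Ioo 0 1) := by
  have hcont : ContinuousOn (fun x => 1 / beta a b * x ^ (a - 1) * (1 - x) ^ (b - 1))
      (Ioo 0 1) := fun x hx =>
    ((continuousAt_const.mul (continuousAt_id.rpow_const (Or.inl hx.1.ne'))).mul
      ((continuousAt_const.sub continuousAt_id).rpow_const
        (Or.inl (sub_pos.2 hx.2).ne'))).continuousWithinAt
  exact hcont.congr fun x hx => if_pos hx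

theorem hasDerivAt_betaCDF (ha : 0 < a) (hb : 0 < b) {x : ℝ} (hx : x ∈ Ioo 0 1) :
    HasDerivAt (betaCDF a b) (betaPDFReal a b x) x := by
  have hFTC := intervalIntegral.integral_hasDerivAt_right
    (integrable_betaPDFReal ha hb).intervalIntegrable (a := 0) (b := x)
    (stronglyMeasurable_betaPDFReal a b).stronglyMeasurableAtFilter
    (continuousOn_betaPDFReal.continuousAt (isOpen_Ioo.mem_nhds hx))
  refine hFTC.congr_of_eventuallyEq (eventually_of_mem (isOpen_Ioo.mem_nhds hx) ?_)
  exact fun y hy => betaCDF_eq_intervalIntegral hy.1.le hy.2.le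

theorem betaCDF_lt_betaCDF_of_lt {q : ℝ} (ha : 0 < a) (hb₁ : 0 < b₁) (hb : b₁ < b₂)
    (hq : q ∈ Ioo 0 1) : betaCDF a b₁ q < betaCDF a b₂ q := by
  have hb₂ : 0 < b₂ := hb₁.trans hb
  rw [betaCDF_eq_intervalIntegral hq.1.le hq.2.le, betaCDF_eq_intervalIntegral hq.1.le hq.2.le]
  refine integral_lt_integral_of_strictAntiOn_ratio
    (r := fun x => beta a b₁ / beta a b₂ * (1 - x) ^ (b₂ - b₁))
    (integrable_betaPDFReal ha hb₁).intervalIntegrable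
    (integrable_betaPDFReal ha hb₂).intervalIntegrable
    (fun x hx => betaPDFReal_pos hx.1 hx.2 ha hb₁) (fun x hx => ?_) (fun x hx y hy hxy => ?_) ?_ hq
  · rw [betaPDFReal, betaPDFReal, if_pos ⟨hx.1, hx.2⟩, if_pos ⟨hx.1, hx.2⟩,
      show b₂ - 1 = (b₂ - b₁) + (b₁ - 1) by ring, rpow_add (sub_pos.2 hx.2)]
    field_simp [(beta_pos ha hb₁).ne', (beta_pos ha hb₂).ne']
  · exact mul_lt_mul_of_pos_left
      (rpow_lt_rpow (sub_pos.2 hy.2).le (by linarith) (sub_pos.2 hb))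
      (div_pos (beta_pos ha hb₁) (beta_pos ha hb₂))
  · rw [← betaCDF_eq_intervalIntegral zero_le_one le_rfl,
      ← betaCDF_eq_intervalIntegral zero_le_one le_rfl, betaCDF_one ha hb₁, betaCDF_one ha hb₂]

theorem contDiffOn_of_rightInvOn_betaCDF (ha : 0 < a) (hb : 0 < b)
    (hG : MapsTo G (Ioo 0 1) (Ioo 0 1)) (hGF : RightInvOn G (betaCDF a b) (Ioo 0 1)) :
    ContDiffOn ℝ 1 G (Ioo 0 1) :=
  contDiffOn_one_of_rightInvOn isOpen_Ioo isOpen_Ioo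
    ((betaCDF_strictMonoOn ha hb).mono Ioo_subset_Icc_self)
    (fun _ hx => hasDerivAt_betaCDF ha hb hx) continuousOn_betaPDFReal
    (fun _ hx => (betaPDFReal_pos hx.1 hx.2 ha hb).ne') (betaCDF_mapsTo ha hb) hG hGF

theorem lt_of_rightInvOn_betaCDF (ha : 0 < a) (hb₁ : 0 < b₁) (hb : b₁ < b₂)
    (hG₁ : MapsTo G₁ (Ioo 0 1) (Ioo 0 1)) (hG₁F : RightInvOn G₁ (betaCDF a b₁) (Ioo 0 1))
    (hG₂ : MapsTo G₂ (Ioo 0 1) (Ioo 0 1)) (hG₂F : RightInvOn G₂ (betaCDF a b₂) (Ioo 0 1))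
    {ω : ℝ} (hω : ω ∈ Ioo 0 1) : G₂ ω < G₁ ω := by
  refine ((betaCDF_strictMonoOn ha (hb₁.trans hb)).lt_iff_lt (Ioo_subset_Icc_self (hG₂ hω))
    (Ioo_subset_Icc_self (hG₁ hω))).1 ?_
  calc betaCDF a b₂ (G₂ ω) = betaCDF a b₁ (G₁ ω) := by rw [hG₂F hω, hG₁F hω]
    _ < betaCDF a b₂ (G₁ ω) := betaCDF_lt_betaCDF_of_lt ha hb₁ hb (hG₁ hω)

theorem not_antitoneOn_div_of_rightInvOn_betaCDF (ha : 0 < a) (hb₁ : 0 < b₁) (hb : b₁ < b₂)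
    (hG₁ : MapsTo G₁ (Ioo 0 1) (Ioo 0 1)) (hG₁F : RightInvOn G₁ (betaCDF a b₁) (Ioo 0 1))
    (hG₂ : MapsTo G₂ (Ioo 0 1) (Ioo 0 1)) (hG₂F : RightInvOn G₂ (betaCDF a b₂) (Ioo 0 1)) :
    ¬ AntitoneOn (fun ω => G₂ ω / G₁ ω) (Ioo 0 1) := by
  intro hanti
  have hb₂ : 0 < b₂ := hb₁.trans hb
  have hhalf : (1 / 2 : ℝ) ∈ Ioo 0 1 := ⟨by norm_num, by norm_num⟩
  set q := G₂ (1 / 2) / G₁ (1 / 2)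
  have hq : q ∈ Ioo 0 1 := ⟨div_pos (hG₂ hhalf).1 (hG₁ hhalf).1,
    (div_lt_one (hG₁ hhalf).1).2 (lt_of_rightInvOn_betaCDF ha hb₁ hb hG₁ hG₁F hG₂ hG₂F hhalf)⟩
  obtain ⟨ω, hωlow, hω1⟩ := exists_between (max_lt hhalf.2 (betaCDF_mapsTo ha hb₂ hq).2)
  have hω : ω ∈ Ioo 0 1 := ⟨hhalf.1.trans_le ((le_max_left _ _).trans hωlow.le), hω1⟩
  have hqG₂ : q < G₂ ω := by
    rw [← (betaCDF_strictMonoOn ha hb₂).lt_iff_lt (Ioo_subset_Icc_self hq)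
      (Ioo_subset_Icc_self (hG₂ hω)), hG₂F hω]
    exact (le_max_right _ _).trans_lt hωlow
  have hG₂_le : G₂ ω ≤ G₂ ω / G₁ ω := le_div_self (hG₂ hω).1.le (hG₁ hω).1 (hG₁ hω).2.le
  have hanti_le : G₂ ω / G₁ ω ≤ q := hanti hhalf hω ((le_max_left _ _).trans hωlow.le)
  linarith

end Beta

theorem stmt_6 (ξ₁ ξ₂₁ ξ₂₂ : ℝ) (hξ₁ : 0 < ξ₁) (h1 : 1 < ξ₂₁) (h2 : ξ₂₁ < ξ₂₂)
    (G₁ G₂ : ℝ → ℝ)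
    (hG₁ : ∀ ω ∈ Set.Ioo (0:ℝ) 1, G₁ ω ∈ Set.Ioo (0:ℝ) 1 ∧ betaCDF ξ₁ ξ₂₁ (G₁ ω) = ω)
    (hG₂ : ∀ ω ∈ Set.Ioo (0:ℝ) 1, G₂ ω ∈ Set.Ioo (0:ℝ) 1 ∧ betaCDF ξ₁ ξ₂₂ (G₂ ω) = ω) :
    (¬ ∃ C : ℝ, ∀ ω ∈ Set.Ioo (0:ℝ) 1, G₂ ω / G₁ ω = C) ∧
    ∃ ω₁ ω₂ : ℝ, 0 < ω₁ ∧ ω₁ < ω₂ ∧ ω₂ < 1 ∧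
      StrictMonoOn (fun ω => G₂ ω / G₁ ω) (Set.Ioo ω₁ ω₂) := by
  have hξ₂₁ : 0 < ξ₂₁ := zero_lt_one.trans h1
  have hG₁maps : MapsTo G₁ (Ioo 0 1) (Ioo 0 1) := fun ω hω => (hG₁ ω hω).1
  have hG₁inv : RightInvOn G₁ (betaCDF ξ₁ ξ₂₁) (Ioo 0 1) := fun ω hω => (hG₁ ω hω).2
  have hG₂maps : MapsTo G₂ (Ioo 0 1) (Ioo 0 1) := fun ω hω => (hG₂ ω hω).1
  have hG₂inv : RightInvOn G₂ (betaCDF ξ₁ ξ₂₂) (Ioo 0 1) := fun ω hω => (hG₂ ω hω).2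
  have hratio : ContDiffOn ℝ 1 (fun ω => G₂ ω / G₁ ω) (Ioo 0 1) :=
    (contDiffOn_of_rightInvOn_betaCDF hξ₁ (hξ₂₁.trans h2) hG₂maps hG₂inv).fun_div
      (contDiffOn_of_rightInvOn_betaCDF hξ₁ hξ₂₁ hG₁maps hG₁inv) fun ω hω => (hG₁maps hω).1.ne'
  obtain ⟨c, d, hcd, hsub, hmono⟩ := exists_Icc_strictMonoOn_of_not_antitoneOn isOpen_Ioo
    (convex_Ioo 0 1) hratio
    (not_antitoneOn_div_of_rightInvOn_betaCDF hξ₁ hξ₂₁ h2 hG₁maps hG₁inv hG₂maps hG₂inv)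
  have hc := left_mem_Icc.2 hcd.le
  have hd := right_mem_Icc.2 hcd.le
  refine ⟨fun ⟨C, hC⟩ => ?_, c, d, (hsub hc).1, hcd, (hsub hd).2, hmono.mono Ioo_subset_Icc_self⟩
  have hlt := hmono hc hd hcd
  simp only [hC c (hsub hc), hC d (hsub hd), lt_self_iff_false] at hlt
end

section
/- Let m = p/2 for p = 2, i.e. m = 1. Then ∫₀¹ (1-ρ)^{m+1}/(mρ) · (1 − 1/(1+mρ)²) dρ = 1/(m+1). More generally, for any real m > 0, ∫₀¹ (1-ρ)^{m+1} · (1/(1+mρ) + 1/(1+mρ)²) dρ = 1/(m+1). -/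
/-! The integrand is the derivative of `-(1 - ρ) ^ (m + 2) / ((m + 1) * (1 + m * ρ))`, which
vanishes at `ρ = 1` and equals `-1 / (m + 1)` at `ρ = 0`. The first identity reduces to the second
because `(1 - (1 + m ρ)⁻²) / (m ρ) = (1 + m ρ)⁻¹ + (1 + m ρ)⁻²`. -/

open MeasureTheory Set

section

variable {m ρ : ℝ}

lemma one_add_mul_pos_of_mem_Icc (hm : -1 < m) (hρ : ρ ∈ Icc (0:ℝ) 1) : 0 < 1 + m * ρ := by
  rcases le_or_gt 0 m with h | h
  · nlinarith [hρ.1]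
  · nlinarith [hρ.2]

lemma hasDerivAt_neg_one_sub_rpow_div (hm : -1 < m) (hρ : ρ ∈ Icc (0:ℝ) 1) :
    HasDerivAt (fun ρ => -((1 - ρ) ^ (m + 2) / ((m + 1) * (1 + m * ρ))))
      ((1 - ρ) ^ (m + 1) * (1 / (1 + m * ρ) + 1 / (1 + m * ρ) ^ 2)) ρ := by
  have hpos := one_add_mul_pos_of_mem_Icc hm hρ
  have hm1 : 0 < m + 1 := by linarith
  have hnum : HasDerivAt (fun ρ : ℝ => (1 - ρ) ^ (m + 2)) (-((m + 2) * (1 - ρ) ^ (m + 1))) ρ := by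
    refine (((hasDerivAt_id' ρ).const_sub 1).rpow_const (Or.inr (by linarith))).congr_deriv ?_
    rw [show m + 2 - 1 = m + 1 by ring]
    ring
  have hden : HasDerivAt (fun ρ : ℝ => (m + 1) * (1 + m * ρ)) ((m + 1) * m) ρ := by
    simpa using (((hasDerivAt_id ρ).const_mul m).const_add 1).const_mul (m + 1)
  refine (hnum.div hden (by positivity)).neg.congr_deriv ?_
  have hsplit : (1 - ρ) ^ (m + 2) = (1 - ρ) ^ (m + 1) * (1 - ρ) := by
    rw [show m + 2 = (m + 1) + 1 by ring, Real.rpow_add' (by linarith [hρ.2]) (by linarith),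
      Real.rpow_one]
  rw [hsplit]
  field_simp
  ring

lemma integral_Ioo_one_sub_rpow_mul (hm : -1 < m) :
    ∫ ρ in Ioo (0:ℝ) 1, (1 - ρ) ^ (m + 1) * (1 / (1 + m * ρ) + 1 / (1 + m * ρ) ^ 2)
      = 1 / (m + 1) := by
  have hcont : ContinuousOn
      (fun ρ : ℝ => (1 - ρ) ^ (m + 1) * (1 / (1 + m * ρ) + 1 / (1 + m * ρ) ^ 2)) (Icc 0 1) := by
    have hne := fun ρ (hρ : ρ ∈ Icc (0:ℝ) 1) => (one_add_mul_pos_of_mem_Icc hm hρ).ne'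
    refine ((continuousOn_const.sub continuousOn_id).rpow_const
      fun _ _ => Or.inr (by linarith)).mul ?_
    exact (continuousOn_const.div (by fun_prop) hne).add
      (continuousOn_const.div (by fun_prop) fun ρ hρ => pow_ne_zero 2 (hne ρ hρ))
  rw [← integral_Ioc_eq_integral_Ioo, ← intervalIntegral.integral_of_le zero_le_one,
    intervalIntegral.integral_eq_sub_of_hasDerivAt
      (fun ρ hρ => hasDerivAt_neg_one_sub_rpow_div hm (by rwa [uIcc_of_le zero_le_one] at hρ))
      (hcont.intervalIntegrable_of_Icc zero_le_one)]
  simp [Real.zero_rpow (show m + 2 ≠ 0 by linarith)]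

lemma integral_Ioo_one_sub_rpow_div_mul (hm : 0 < m) :
    ∫ ρ in Ioo (0:ℝ) 1, (1 - ρ) ^ (m + 1) / (m * ρ) * (1 - 1 / (1 + m * ρ) ^ 2)
      = 1 / (m + 1) := by
  rw [← integral_Ioo_one_sub_rpow_mul (by linarith)]
  refine setIntegral_congr_fun measurableSet_Ioo fun ρ hρ => ?_
  have : 0 < 1 + m * ρ := by nlinarith [hρ.1]
  have : 0 < ρ := hρ.1
  field_simp
  ring

end

theorem stmt_10 :
    (∫ ρ in Set.Ioo (0:ℝ) 1,
        (1 - ρ) ^ ((1:ℝ) + 1) / (1 * ρ) * (1 - 1 / (1 + 1 * ρ) ^ (2:ℕ)) = 1 / ((1:ℝ) + 1)) ∧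
    ∀ m : ℝ, 0 < m →
      ∫ ρ in Set.Ioo (0:ℝ) 1,
          (1 - ρ) ^ (m + 1) * (1 / (1 + m * ρ) + 1 / (1 + m * ρ) ^ (2:ℕ)) = 1 / (m + 1) :=
  ⟨integral_Ioo_one_sub_rpow_div_mul one_pos,
    fun _ hm => integral_Ioo_one_sub_rpow_mul (by linarith)⟩
end

section
/- Let n₁ = 2, p ≥ 1, and 0 ≤ a < p/2. Then equality/inequality in the dominance condition reduces to: (p/2 − a)/(1 + p/2) ≤ ∫₀¹ (1-ρ)^{1+p/2}/ρ · (1 − 1/(1+(p/2−a)ρ)²) dρ, and this inequality holds (with equality iff a = 0). -/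
open MeasureTheory Set

/-!
Write the integrand as `(1 - ρ) ^ (m + 1) * φ ρ` with `φ ρ = (1 - (1 + c ρ)⁻²) / ρ
= c (2 + c ρ) / (1 + c ρ)²`, which is nonnegative and decreasing on `[0, 1]`.
For `m = c` the inequality is an equality: `-(c / (c + 1)) (1 - ρ) ^ (c + 2) / (1 + c ρ)` is an
antiderivative. For `m > c` let `k = (c + 1) / (m + 1)`; then
`g ρ = (1 - ρ) ^ (m + 1) - k (1 - ρ) ^ (c + 1)` changes sign once, from `+` to `-`, at some `ρ₀`,
so monotonicity of `φ` gives `∫ φ g ≥ φ ρ₀ ∫ g`, and `∫ g = 1 / (m + 2) - k / (c + 2) ≥ 0`.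
By the case `m = c`, `∫ φ g = ∫ (1 - ρ) ^ (m + 1) φ - c / (m + 1)`.
-/

noncomputable def invSqSlope (c ρ : ℝ) : ℝ := c * (2 + c * ρ) / (1 + c * ρ) ^ 2

theorem one_sub_one_div_sq_div_eq_invSqSlope {c ρ : ℝ} (hρ : ρ ≠ 0) (h : 1 + c * ρ ≠ 0) :
    (1 - 1 / (1 + c * ρ) ^ 2) / ρ = invSqSlope c ρ := by
  unfold invSqSlope
  field_simp
  ring

theorem invSqSlope_nonneg {c ρ : ℝ} (hc : 0 ≤ c) (hρ : 0 ≤ ρ) : 0 ≤ invSqSlope c ρ := by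
  unfold invSqSlope
  positivity

theorem continuousOn_invSqSlope {c : ℝ} (hc : 0 ≤ c) : ContinuousOn (invSqSlope c) (Ici 0) :=
  ContinuousOn.div (by fun_prop) (by fun_prop) fun ρ (hρ : 0 ≤ ρ) => by positivity

theorem antitoneOn_invSqSlope {c : ℝ} (hc : 0 ≤ c) : AntitoneOn (invSqSlope c) (Ici 0) := by
  intro x (hx : 0 ≤ x) y (hy : 0 ≤ y) hxy
  unfold invSqSlope
  rw [div_le_div_iff₀ (by positivity) (by positivity)]
  have key : c * (2 + c * x) * (1 + c * y) ^ 2 - c * (2 + c * y) * (1 + c * x) ^ 2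
      = c ^ 2 * (y - x) * (3 + 2 * (c * x + c * y) + (c * x) * (c * y)) := by ring
  have : 0 ≤ c ^ 2 * (y - x) * (3 + 2 * (c * x + c * y) + (c * x) * (c * y)) := by
    have := sub_nonneg.2 hxy
    positivity
  linarith

theorem integral_one_sub_rpow {s : ℝ} (hs : -1 < s) :
    ∫ ρ in Ioo (0:ℝ) 1, (1 - ρ) ^ s = 1 / (s + 1) := by
  rw [← integral_Ioc_eq_integral_Ioo, ← intervalIntegral.integral_of_le zero_le_one,
    intervalIntegral.integral_comp_sub_left (fun x => x ^ s), integral_rpow (Or.inl hs)]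
  norm_num [Real.zero_rpow (by linarith : s + 1 ≠ 0)]

theorem continuous_one_sub_rpow {s : ℝ} (hs : 0 ≤ s) : Continuous fun ρ : ℝ => (1 - ρ) ^ s :=
  (continuous_const.sub continuous_id).rpow_const fun _ => Or.inr hs

theorem integrableOn_one_sub_rpow {s : ℝ} (hs : 0 ≤ s) :
    IntegrableOn (fun ρ : ℝ => (1 - ρ) ^ s) (Ioo 0 1) :=
  ((continuous_one_sub_rpow hs).continuousOn.integrableOn_Icc).mono_set Ioo_subset_Icc_self

theorem integrableOn_one_sub_rpow_mul_invSqSlope {s c : ℝ} (hs : 0 ≤ s) (hc : 0 ≤ c) :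
    IntegrableOn (fun ρ : ℝ => (1 - ρ) ^ s * invSqSlope c ρ) (Ioo 0 1) :=
  (((continuous_one_sub_rpow hs).continuousOn.mul
    ((continuousOn_invSqSlope hc).mono Icc_subset_Ici_self)).integrableOn_Icc).mono_set
    Ioo_subset_Icc_self

theorem integral_one_sub_rpow_mul_invSqSlope_self {c : ℝ} (hc : 0 ≤ c) :
    ∫ ρ in Ioo (0:ℝ) 1, (1 - ρ) ^ (c + 1) * invSqSlope c ρ = c / (c + 1) := by
  have hc1 : 0 < c + 1 := by linarith
  let F : ℝ → ℝ := fun ρ => -(c / (c + 1)) * ((1 - ρ) ^ (c + 2) / (1 + c * ρ))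
  have hF_cont : ContinuousOn F (Icc 0 1) := by
    refine continuousOn_const.mul (ContinuousOn.div
      (continuous_one_sub_rpow (by linarith)).continuousOn (by fun_prop) ?_)
    intro ρ hρ
    have := hρ.1
    positivity
  have hF_deriv : ∀ x ∈ Ioo (0:ℝ) 1, HasDerivAt F ((1 - x) ^ (c + 1) * invSqSlope c x) x := by
    intro x ⟨hx0, hx1⟩
    have hx : 0 < 1 - x := by linarith
    have hu : 0 < 1 + c * x := by positivity
    have hpow := ((hasDerivAt_id x).const_sub 1).rpow_const (p := c + 2) (Or.inl hx.ne')
    have hlin := ((hasDerivAt_id x).const_mul c).const_add 1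
    refine ((hpow.div hlin hu.ne').const_mul (-(c / (c + 1)))).congr_deriv ?_
    simp only [id]
    have hsplit : (1 - x) ^ (c + 2) = (1 - x) ^ (c + 1) * (1 - x) := by
      rw [← Real.rpow_add_one hx.ne']
      ring_nf
    rw [show c + 2 - 1 = c + 1 by ring, hsplit]
    unfold invSqSlope
    field_simp
    ring
  have hint : IntervalIntegrable (fun ρ => (1 - ρ) ^ (c + 1) * invSqSlope c ρ) volume 0 1 :=
    (intervalIntegrable_iff_integrableOn_Ioo_of_le zero_le_one).2
      (integrableOn_one_sub_rpow_mul_invSqSlope hc1.le hc)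
  rw [← integral_Ioc_eq_integral_Ioo, ← intervalIntegral.integral_of_le zero_le_one,
    intervalIntegral.integral_eq_sub_of_hasDerivAt_of_le zero_le_one hF_cont hF_deriv hint]
  norm_num [F, Real.zero_rpow (by linarith : c + 2 ≠ 0)]

theorem mul_integral_le_integral_mul_of_antitoneOn {α : Type*} [LinearOrder α]
    [MeasurableSpace α] {μ : Measure α} {s : Set α} (hs : MeasurableSet s) {φ g : α → ℝ}
    {x₀ : α} (hφ : AntitoneOn φ (insert x₀ s))
    (hg_left : ∀ x ∈ s, x ≤ x₀ → 0 ≤ g x) (hg_right : ∀ x ∈ s, x₀ ≤ x → g x ≤ 0)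
    (hg : IntegrableOn g s μ) (hφg : IntegrableOn (fun x => φ x * g x) s μ) :
    φ x₀ * ∫ x in s, g x ∂μ ≤ ∫ x in s, φ x * g x ∂μ := by
  rw [← integral_const_mul]
  refine setIntegral_mono_on (hg.const_mul _) hφg hs fun x hx => ?_
  rcases le_total x x₀ with h | h
  · exact mul_le_mul_of_nonneg_right (hφ (mem_insert_of_mem _ hx) (mem_insert _ _) h)
      (hg_left x hx h)
  · exact mul_le_mul_of_nonpos_right (hφ (mem_insert _ _) (mem_insert_of_mem _ hx) h)
      (hg_right x hx h)

theorem exists_sign_change_one_sub_rpow_sub_mul {a b k : ℝ} (hab : a < b) (hk0 : 0 ≤ k)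
    (hk1 : k ≤ 1) :
    ∃ x₀, 0 ≤ x₀ ∧ (∀ x < 1, x ≤ x₀ → 0 ≤ (1 - x) ^ b - k * (1 - x) ^ a) ∧
      ∀ x < 1, x₀ ≤ x → (1 - x) ^ b - k * (1 - x) ^ a ≤ 0 := by
  have hba : 0 < b - a := sub_pos.2 hab
  have hfactor : ∀ x < 1,
      (1 - x) ^ b - k * (1 - x) ^ a = (1 - x) ^ a * ((1 - x) ^ (b - a) - k) := by
    intro x hx
    rw [mul_sub, ← Real.rpow_add (by linarith)]
    ring_nf
  refine ⟨1 - k ^ (b - a)⁻¹, sub_nonneg.2 (Real.rpow_le_one hk0 hk1 (inv_nonneg.2 hba.le)),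
    fun x hx hxx₀ => ?_, fun x hx hx₀x => ?_⟩
  · rw [hfactor x hx]
    refine mul_nonneg (Real.rpow_nonneg (by linarith) _) (sub_nonneg.2 ?_)
    exact (Real.rpow_inv_le_iff_of_pos hk0 (by linarith) hba).1 (by linarith)
  · rw [hfactor x hx]
    refine mul_nonpos_of_nonneg_of_nonpos (Real.rpow_nonneg (by linarith) _) (sub_nonpos.2 ?_)
    exact (Real.le_rpow_inv_iff_of_pos (by linarith) hk0 hba).1 (by linarith)

theorem div_add_one_le_integral_one_sub_rpow_mul_invSqSlope {m c : ℝ} (hc : 0 ≤ c)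
    (hcm : c < m) :
    c / (m + 1) ≤ ∫ ρ in Ioo (0:ℝ) 1, (1 - ρ) ^ (m + 1) * invSqSlope c ρ := by
  have hm1 : 0 < m + 1 := by linarith
  have hc1 : 0 < c + 1 := by linarith
  set k := (c + 1) / (m + 1) with hk
  obtain ⟨ρ₀, hρ₀, hleft, hright⟩ := exists_sign_change_one_sub_rpow_sub_mul (k := k)
    (by linarith : c + 1 < m + 1) (by positivity) ((div_le_one hm1).2 (by linarith))
  have hint_m := integrableOn_one_sub_rpow hm1.le
  have hint_c := (integrableOn_one_sub_rpow hc1.le).const_mul k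
  have hmass : 0 ≤ ∫ x in Ioo (0:ℝ) 1, ((1 - x) ^ (m + 1) - k * (1 - x) ^ (c + 1)) := by
    rw [integral_sub hint_m hint_c, integral_const_mul, integral_one_sub_rpow (by linarith),
      integral_one_sub_rpow (by linarith), hk, sub_nonneg, div_mul_div_comm, mul_one,
      div_le_div_iff₀ (by positivity) (by positivity)]
    nlinarith
  have hsplit : (fun x => invSqSlope c x * ((1 - x) ^ (m + 1) - k * (1 - x) ^ (c + 1)))
      = fun x => (1 - x) ^ (m + 1) * invSqSlope c x
        - k * ((1 - x) ^ (c + 1) * invSqSlope c x) := by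
    funext x
    ring
  have hint_φm := integrableOn_one_sub_rpow_mul_invSqSlope hm1.le hc
  have hint_φc := (integrableOn_one_sub_rpow_mul_invSqSlope hc1.le hc).const_mul k
  have hweighted : ∫ x in Ioo (0:ℝ) 1,
      invSqSlope c x * ((1 - x) ^ (m + 1) - k * (1 - x) ^ (c + 1))
      = (∫ x in Ioo (0:ℝ) 1, (1 - x) ^ (m + 1) * invSqSlope c x) - c / (m + 1) := by
    rw [hsplit, integral_sub hint_φm hint_φc, integral_const_mul,
      integral_one_sub_rpow_mul_invSqSlope_self hc, hk]
    field_simp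
  have hcross := mul_integral_le_integral_mul_of_antitoneOn measurableSet_Ioo
    ((antitoneOn_invSqSlope hc).mono (insert_subset hρ₀ fun x hx => hx.1.le))
    (fun x hx => hleft x hx.2) (fun x hx => hright x hx.2) (hint_m.sub hint_c)
    (hsplit ▸ hint_φm.sub hint_φc)
  rw [hweighted] at hcross
  nlinarith [mul_nonneg (invSqSlope_nonneg hc hρ₀) hmass]

theorem stmt_14_general (m c : ℝ) (hc : 0 < c) (hcm : c ≤ m) :
    ∫ ρ in Set.Ioo (0:ℝ) 1,
        (1 - ρ) ^ (m + 1) / ρ * (1 - 1 / (1 + c * ρ) ^ (2:ℕ)) ≥ c / (m + 1) := by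
  have hintegrand : EqOn (fun ρ : ℝ => (1 - ρ) ^ (m + 1) / ρ * (1 - 1 / (1 + c * ρ) ^ 2))
      (fun ρ => (1 - ρ) ^ (m + 1) * invSqSlope c ρ) (Ioo 0 1) := fun ρ hρ => by
    have := hρ.1
    beta_reduce
    rw [← one_sub_one_div_sq_div_eq_invSqSlope hρ.1.ne' (by positivity)]
    ring
  rw [ge_iff_le, setIntegral_congr_fun measurableSet_Ioo hintegrand]
  rcases hcm.eq_or_lt with rfl | hlt
  · exact (integral_one_sub_rpow_mul_invSqSlope_self hc.le).ge
  · exact div_add_one_le_integral_one_sub_rpow_mul_invSqSlope hc.le hlt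

theorem stmt_14 (m c : ℝ) (hm : 0 < m) (hc : 0 < c) (hcm : c ≤ m) :
    ∫ ρ in Set.Ioo (0:ℝ) 1,
        (1 - ρ) ^ (m + 1) / ρ * (1 - 1 / (1 + c * ρ) ^ (2:ℕ)) ≥ c / (m + 1) :=
  stmt_14_general m c hc hcm
end
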